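/- The mixed temporal–spatial torsion d-tensor of the Cartan canonical connection of the autonomous metrical multi-time Lagrange space of electrodynamics, defined as R^{(m)}_{(μ)αj} = δM^{(m)}_{(μ)α}/δx^j − δN^{(m)}_{(μ)j}/δt^α, satisfies, for all indices and all (t,x,y): R^{(m)}_{(μ)αj} = −(1/4)·Σ_{η,k} h_{μη}(t) g^{mk}(x)·[Σ_γ H^η_{αγ}(t) U^{(γ)}_{(k)j}(t,x) + ∂U^{(η)}_{(k)j}/∂t^α (t,x)]. -/

import Mathlib

/- STATEMENT 5: The mixed temporal–spatial torsion d-tensor of the Cartan canonical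
connection satisfies
`R^{(m)}_{(μ)αj} = −(1/4)·Σ_{η,k} h_{μη} g^{mk}·[Σ_γ H^η_{αγ} U^{(γ)}_{(k)j} + ∂U^{(η)}_{(k)j}/∂t^α]`. -/

open scoped BigOperators

noncomputable section

def pd {m : ℕ} (f : (Fin m → ℝ) → ℝ) (a : Fin m) (t : Fin m → ℝ) : ℝ :=
  fderiv ℝ f t (Pi.single a 1)

def pdY {n p : ℕ} (f : (Fin n → Fin p → ℝ) → ℝ) (i : Fin n) (a : Fin p)
    (y : Fin n → Fin p → ℝ) : ℝ :=
  fderiv ℝ f y (Pi.single i (Pi.single a 1))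

/-- Christoffel symbols `H^c_{ab}` of the temporal metric `h`. -/
def chT {p : ℕ} (h : (Fin p → ℝ) → Matrix (Fin p) (Fin p) ℝ)
    (c a b : Fin p) (t : Fin p → ℝ) : ℝ :=
  (1/2) * ∑ e, (h t)⁻¹ c e *
    (pd (fun s => h s e a) b t + pd (fun s => h s e b) a t - pd (fun s => h s a b) e t)

/-- Christoffel symbols `γ^i_{jk}` of the spatial metric `g`. -/
def chS {n : ℕ} (g : (Fin n → ℝ) → Matrix (Fin n) (Fin n) ℝ)
    (i j k : Fin n) (x : Fin n → ℝ) : ℝ :=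
  (1/2) * ∑ m, (g x)⁻¹ i m *
    (pd (fun z => g z m j) k x + pd (fun z => g z m k) j x - pd (fun z => g z j k) m x)

/-- `U^{(a)}_{(i)j} = ∂U^{(a)}_{(i)}/∂x^j − ∂U^{(a)}_{(j)}/∂x^i`. -/
def Ucurl {p n : ℕ} (U : Fin p → Fin n → (Fin p → ℝ) → (Fin n → ℝ) → ℝ)
    (a : Fin p) (i j : Fin n) (t : Fin p → ℝ) (x : Fin n → ℝ) : ℝ :=
  pd (fun z => U a i t z) j x - pd (fun z => U a j t z) i x

/-- Temporal components `M^{(i)}_{(a)b} = −Σ_c H^c_{ab}(t) y^i_c` of the canonical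
nonlinear connection. -/
def Mcon {p n : ℕ} (h : (Fin p → ℝ) → Matrix (Fin p) (Fin p) ℝ)
    (i : Fin n) (a b : Fin p) (t : Fin p → ℝ) (y : Fin n → Fin p → ℝ) : ℝ :=
  -∑ c, chT h c a b t * y i c

/-- Spatial components
`N^{(i)}_{(a)j} = Σ_k γ^i_{jk}(x) y^k_a + (1/4)Σ_{c,l} h_{ac}(t) g^{il}(x) U^{(c)}_{(l)j}(t,x)`
of the canonical nonlinear connection. -/
def Ncon {p n : ℕ} (h : (Fin p → ℝ) → Matrix (Fin p) (Fin p) ℝ)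
    (g : (Fin n → ℝ) → Matrix (Fin n) (Fin n) ℝ)
    (U : Fin p → Fin n → (Fin p → ℝ) → (Fin n → ℝ) → ℝ)
    (i : Fin n) (a : Fin p) (j : Fin n) (t : Fin p → ℝ) (x : Fin n → ℝ)
    (y : Fin n → Fin p → ℝ) : ℝ :=
  (∑ k, chS g i j k x * y k a)
    + (1/4) * ∑ c, ∑ l, h t a c * (g x)⁻¹ i l * Ucurl U c l j t x

/-- Adapted temporal derivative `δ/δt^b = ∂/∂t^b − Σ_{k,c} M^{(k)}_{(c)b} ∂/∂y^k_c`
applied to a function on the 1-jet space. -/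
def deltaT {p n : ℕ} (h : (Fin p → ℝ) → Matrix (Fin p) (Fin p) ℝ)
    (J : (Fin p → ℝ) → (Fin n → ℝ) → (Fin n → Fin p → ℝ) → ℝ) (b : Fin p)
    (t : Fin p → ℝ) (x : Fin n → ℝ) (y : Fin n → Fin p → ℝ) : ℝ :=
  pd (fun s => J s x y) b t - ∑ k, ∑ c, Mcon h k c b t y * pdY (J t x) k c y

/-- Adapted spatial derivative `δ/δx^j = ∂/∂x^j − Σ_{k,c} N^{(k)}_{(c)j} ∂/∂y^k_c`
applied to a function on the 1-jet space. -/
def deltaX {p n : ℕ} (h : (Fin p → ℝ) → Matrix (Fin p) (Fin p) ℝ)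
    (g : (Fin n → ℝ) → Matrix (Fin n) (Fin n) ℝ)
    (U : Fin p → Fin n → (Fin p → ℝ) → (Fin n → ℝ) → ℝ)
    (J : (Fin p → ℝ) → (Fin n → ℝ) → (Fin n → Fin p → ℝ) → ℝ) (j : Fin n)
    (t : Fin p → ℝ) (x : Fin n → ℝ) (y : Fin n → Fin p → ℝ) : ℝ :=
  pd (fun z => J t z y) j x - ∑ k, ∑ c, Ncon h g U k c j t x y * pdY (J t x) k c y

/-- Mixed torsion `R^{(m)}_{(μ)αj} = δM^{(m)}_{(μ)α}/δx^j − δN^{(m)}_{(μ)j}/δt^α`. -/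
def torsionTS {p n : ℕ} (h : (Fin p → ℝ) → Matrix (Fin p) (Fin p) ℝ)
    (g : (Fin n → ℝ) → Matrix (Fin n) (Fin n) ℝ)
    (U : Fin p → Fin n → (Fin p → ℝ) → (Fin n → ℝ) → ℝ)
    (m : Fin n) (mu a : Fin p) (j : Fin n)
    (t : Fin p → ℝ) (x : Fin n → ℝ) (y : Fin n → Fin p → ℝ) : ℝ :=
  deltaX h g U (fun s _ w => Mcon h m mu a s w) j t x y
    - deltaT h (fun s z w => Ncon h g U m mu j s z w) a t x y

section helpers
variable {E : Type*} [NormedAddCommGroup E] [NormedSpace ℝ E] {x v : E}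

lemma fdv_sum {ι : Type*} (s : Finset ι) (f : ι → E → ℝ)
    (hf : ∀ i ∈ s, DifferentiableAt ℝ (f i) x) :
    fderiv ℝ (fun z => ∑ i ∈ s, f i z) x v = ∑ i ∈ s, fderiv ℝ (f i) x v := by
  rw [fderiv_fun_sum hf]; simp

lemma fdv_mul {f g : E → ℝ} (hf : DifferentiableAt ℝ f x) (hg : DifferentiableAt ℝ g x) :
    fderiv ℝ (fun z => f z * g z) x v = fderiv ℝ f x v * g x + f x * fderiv ℝ g x v := by
  rw [fderiv_fun_mul hf hg]; simp; ring

lemma fdv_const_mul {f : E → ℝ} (c : ℝ) (hf : DifferentiableAt ℝ f x) :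
    fderiv ℝ (fun z => c * f z) x v = c * fderiv ℝ f x v := by
  rw [fderiv_const_mul hf]; simp

lemma fdv_mul_const {f : E → ℝ} (c : ℝ) (hf : DifferentiableAt ℝ f x) :
    fderiv ℝ (fun z => f z * c) x v = fderiv ℝ f x v * c := by
  rw [fderiv_mul_const hf]; simp; ring

lemma fdv_neg {f : E → ℝ} : fderiv ℝ (fun z => -f z) x v = -fderiv ℝ f x v := by
  rw [fderiv_fun_neg]; simp

lemma fdv_const_add {f : E → ℝ} (c : ℝ) :
    fderiv ℝ (fun z => c + f z) x v = fderiv ℝ f x v := by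
  rw [fderiv_const_add]

lemma fdv_add_const {f : E → ℝ} (c : ℝ) :
    fderiv ℝ (fun z => f z + c) x v = fderiv ℝ f x v := by
  rw [fderiv_add_const]
end helpers

lemma fdv_pi_apply {n p : ℕ} (i : Fin n) (b : Fin p) (y v : Fin n → Fin p → ℝ) :
    fderiv ℝ (fun w : Fin n → Fin p → ℝ => w i b) y v = v i b := by
  have : (fun w : Fin n → Fin p → ℝ => w i b)
      = ⇑((ContinuousLinearMap.proj b).comp
          (ContinuousLinearMap.proj (R := ℝ) (φ := fun _ : Fin n => Fin p → ℝ) i)) := rfl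
  rw [this, ContinuousLinearMap.fderiv]
  rfl

lemma diff_pi_apply {n p : ℕ} (i : Fin n) (b : Fin p) (y : Fin n → Fin p → ℝ) :
    DifferentiableAt ℝ (fun w : Fin n → Fin p → ℝ => w i b) y :=
  (((ContinuousLinearMap.proj b).comp
      (ContinuousLinearMap.proj (R := ℝ) (φ := fun _ : Fin n => Fin p → ℝ) i)).differentiable).differentiableAt

lemma pdY_neg_sum {n p : ℕ} (A : Fin p → ℝ) (m k : Fin n) (c : Fin p) (y : Fin n → Fin p → ℝ) :
    pdY (fun w => -∑ c', A c' * w m c') k c y = -(if m = k then A c else 0) := by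
  unfold pdY
  rw [fdv_neg, fdv_sum _ _ (fun i _ => (diff_pi_apply m i y).const_mul (A i))]
  have : ∀ c', fderiv ℝ (fun w : Fin n → Fin p → ℝ => A c' * w m c') y
      (Pi.single k (Pi.single c 1)) = A c' * (Pi.single k (Pi.single c (1:ℝ)) : Fin n → Fin p → ℝ) m c' := by
    intro c'
    rw [fdv_const_mul _ (diff_pi_apply m c' y), fdv_pi_apply]
  simp only [this]
  by_cases hmk : m = k <;>
    simp [hmk, Pi.single_apply, mul_ite, Finset.sum_ite_eq', eq_comm]

lemma pdY_sum_add_const {n p : ℕ} (B : Fin n → ℝ) (mu : Fin p) (C : ℝ) (k : Fin n) (c : Fin p)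
    (y : Fin n → Fin p → ℝ) :
    pdY (fun w => (∑ k', B k' * w k' mu) + C) k c y = if mu = c then B k else 0 := by
  unfold pdY
  rw [fdv_add_const, fdv_sum _ _ (fun i _ => (diff_pi_apply i mu y).const_mul (B i))]
  have : ∀ k', fderiv ℝ (fun w : Fin n → Fin p → ℝ => B k' * w k' mu) y
      (Pi.single k (Pi.single c 1)) = B k' * (Pi.single k (Pi.single c (1:ℝ)) : Fin n → Fin p → ℝ) k' mu := by
    intro k'
    rw [fdv_const_mul _ (diff_pi_apply k' mu y), fdv_pi_apply]
  simp only [this]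
  by_cases hmc : mu = c <;>
    simp [hmc, Pi.single_apply, ite_apply, Pi.zero_apply, mul_ite,
      Finset.sum_ite_eq, Finset.sum_ite_eq', eq_comm]

lemma ucurl_contDiff {p n : ℕ} (U : Fin p → Fin n → (Fin p → ℝ) → (Fin n → ℝ) → ℝ)
    (Usmooth : ∀ a i, ContDiff ℝ (⊤ : ℕ∞) (fun q : (Fin p → ℝ) × (Fin n → ℝ) => U a i q.1 q.2))
    (c : Fin p) (i j : Fin n) (x : Fin n → ℝ) :
    ContDiff ℝ (⊤ : ℕ∞) (fun s => Ucurl U c i j s x) := by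
  have key : ∀ (i j : Fin n), ContDiff ℝ (⊤ : ℕ∞)
      (fun s : Fin p → ℝ => pd (fun z => U c i s z) j x) := by
    intro i j
    have A : ContDiff ℝ (⊤ : ℕ∞) (fun s : Fin p → ℝ => fderiv ℝ (fun z => U c i s z) x) :=
      ContDiff.fderiv (Usmooth c i) contDiff_const (by simp)
    exact A.clm_apply contDiff_const
  exact (key i j).sub (key j i)

lemma metric_id {p : ℕ} (h : (Fin p → ℝ) → Matrix (Fin p) (Fin p) ℝ)
    (hsymm : ∀ t, (h t).IsSymm) (hinv : ∀ t, IsUnit (h t).det)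
    (mu a e : Fin p) (t : Fin p → ℝ) :
    pd (fun s => h s mu e) a t
      = ∑ c, h t c e * chT h c mu a t + ∑ c, h t mu c * chT h c a e t := by
  have hmulinv : ∀ b f, ∑ c, h t b c * (h t)⁻¹ c f = if b = f then 1 else 0 := by
    intro b f
    have h1 : (h t * (h t)⁻¹) b f = (1 : Matrix (Fin p) (Fin p) ℝ) b f := by
      rw [Matrix.mul_nonsing_inv (h t) (hinv t)]
    simpa [Matrix.mul_apply, Matrix.one_apply] using h1
  have hsy : ∀ b c, h t b c = h t c b := fun b c => (hsymm t).apply c b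
  have key : ∀ (b : Fin p) (D : Fin p → ℝ),
      ∑ c, h t b c * ((1/2) * ∑ f, (h t)⁻¹ c f * D f) = (1/2) * D b := by
    intro b D
    have e1 : ∀ c, h t b c * ((1/2) * ∑ f, (h t)⁻¹ c f * D f)
        = ∑ f, h t b c * ((h t)⁻¹ c f * ((1/2) * D f)) := by
      intro c; rw [Finset.mul_sum]; rw [Finset.mul_sum]
      apply Finset.sum_congr rfl; intros; ring
    simp only [e1]
    rw [Finset.sum_comm]
    have e2 : ∀ f, ∑ c, h t b c * ((h t)⁻¹ c f * ((1/2) * D f))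
        = (if b = f then 1 else 0) * ((1/2) * D f) := by
      intro f
      rw [← hmulinv b f, Finset.sum_mul]
      apply Finset.sum_congr rfl; intros; ring
    simp only [e2]
    simp [Finset.sum_ite_eq]
  have k1 : ∑ c, h t c e * chT h c mu a t
      = (1/2) * (pd (fun s => h s e mu) a t + pd (fun s => h s e a) mu t
          - pd (fun s => h s mu a) e t) := by
    unfold chT
    have : ∀ c, h t c e = h t e c := fun c => hsy c e
    simp only [this]
    exact key e _
  have k2 : ∑ c, h t mu c * chT h c a e t
      = (1/2) * (pd (fun s => h s mu a) e t + pd (fun s => h s mu e) a t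
          - pd (fun s => h s a e) mu t) := by
    unfold chT
    exact key mu _
  have fs1 : pd (fun s => h s e mu) a t = pd (fun s => h s mu e) a t := by
    congr 1; funext s; exact (hsymm s).apply mu e
  have fs2 : pd (fun s => h s e a) mu t = pd (fun s => h s a e) mu t := by
    congr 1; funext s; exact (hsymm s).apply a e
  rw [k1, k2, fs1, fs2]; ring

lemma swap3 {p n : ℕ} (F : Fin p → Fin p → Fin n → ℝ) :
    ∑ e, ∑ l, ∑ c, F e c l = ∑ e, ∑ l, ∑ c, F c e l :=
  calc ∑ e, ∑ l, ∑ c, F e c l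
      = ∑ e, ∑ c, ∑ l, F e c l := Finset.sum_congr rfl fun _ _ => Finset.sum_comm
    _ = ∑ c, ∑ e, ∑ l, F e c l := Finset.sum_comm
    _ = ∑ e, ∑ l, ∑ c, F c e l := Finset.sum_congr rfl fun _ _ => Finset.sum_comm

theorem mixed_torsion_of_cartan_connection {p n : ℕ}
    (h : (Fin p → ℝ) → Matrix (Fin p) (Fin p) ℝ)
    (g : (Fin n → ℝ) → Matrix (Fin n) (Fin n) ℝ)
    (U : Fin p → Fin n → (Fin p → ℝ) → (Fin n → ℝ) → ℝ)
    (hsmooth : ∀ a b, ContDiff ℝ (⊤ : ℕ∞) (fun t => h t a b))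
    (hsymm : ∀ t, (h t).IsSymm)
    (hinv : ∀ t, IsUnit (h t).det)
    (gsmooth : ∀ i j, ContDiff ℝ (⊤ : ℕ∞) (fun x => g x i j))
    (gsymm : ∀ x, (g x).IsSymm)
    (ginv : ∀ x, IsUnit (g x).det)
    (Usmooth : ∀ a i, ContDiff ℝ (⊤ : ℕ∞) (fun q : (Fin p → ℝ) × (Fin n → ℝ) => U a i q.1 q.2))
    (m : Fin n) (mu a : Fin p) (j : Fin n)
    (t : Fin p → ℝ) (x : Fin n → ℝ) (y : Fin n → Fin p → ℝ) :
    torsionTS h g U m mu a j t x y =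
      -(1/4) * ∑ e, ∑ k, h t mu e * (g x)⁻¹ m k *
        ((∑ c, chT h e a c t * Ucurl U c k j t x)
          + pd (fun s => Ucurl U e k j s x) a t) := by
  classical
  have dh : ∀ b c, DifferentiableAt ℝ (fun s => h s b c) t :=
    fun b c => ((hsmooth b c).differentiable (by simp)).differentiableAt
  have dW : ∀ (c : Fin p) (l : Fin n), DifferentiableAt ℝ (fun s => Ucurl U c l j s x) t :=
    fun c l => ((ucurl_contDiff U Usmooth c l j x).differentiable (by simp)).differentiableAt
  have dterm : ∀ (c : Fin p) (l : Fin n),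
      DifferentiableAt ℝ (fun s => h s mu c * (g x)⁻¹ m l * Ucurl U c l j s x) t :=
    fun c l => ((dh mu c).mul_const _).mul (dW c l)
  -- Step A : δM/δx^j
  have hA : deltaX h g U (fun s _ w => Mcon h m mu a s w) j t x y
      = ∑ c, Ncon h g U m c j t x y * chT h c mu a t := by
    simp only [deltaX]
    have e1 : pd (fun _ : Fin n → ℝ => Mcon h m mu a t y) j x = 0 := by
      unfold pd; simp
    have e2 : ∀ (k : Fin n) (c : Fin p), pdY (fun w => Mcon h m mu a t w) k c y
        = -(if m = k then chT h c mu a t else 0) :=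
      fun k c => pdY_neg_sum (fun c' => chT h c' mu a t) m k c y
    rw [e1]
    simp only [e2, mul_neg, mul_ite, mul_zero, Finset.sum_neg_distrib]
    rw [Finset.sum_comm]
    simp [Finset.sum_ite_eq]
  -- Step B : δN/δt^a
  have hP : pd (fun s => Ncon h g U m mu j s x y) a t
      = (1/4) * ∑ c, ∑ l, (pd (fun s => h s mu c) a t * (g x)⁻¹ m l * Ucurl U c l j t x
          + h t mu c * (g x)⁻¹ m l * pd (fun s => Ucurl U c l j s x) a t) := by
    simp only [Ncon]
    unfold pd
    rw [fdv_const_add]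
    rw [fdv_const_mul _ (DifferentiableAt.fun_sum
      (fun c _ => DifferentiableAt.fun_sum (fun l _ => dterm c l)))]
    congr 1
    rw [fdv_sum _ _ (fun c _ => DifferentiableAt.fun_sum (fun l _ => dterm c l))]
    apply Finset.sum_congr rfl; intro c _
    rw [fdv_sum _ _ (fun l _ => dterm c l)]
    apply Finset.sum_congr rfl; intro l _
    rw [fdv_mul ((dh mu c).mul_const _) (dW c l), fdv_mul_const _ (dh mu c)]
  have hB : deltaT h (fun s z w => Ncon h g U m mu j s z w) a t x y
      = (1/4) * ∑ c, ∑ l, (pd (fun s => h s mu c) a t * (g x)⁻¹ m l * Ucurl U c l j t x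
          + h t mu c * (g x)⁻¹ m l * pd (fun s => Ucurl U c l j s x) a t)
        - ∑ k, Mcon h k mu a t y * chS g m j k x := by
    simp only [deltaT]
    rw [hP]
    congr 1
    have e3 : ∀ (k : Fin n) (c : Fin p), pdY (fun w => Ncon h g U m mu j t x w) k c y
        = if mu = c then chS g m j k x else 0 :=
      fun k c => pdY_sum_add_const (fun k' => chS g m j k' x) mu _ k c y
    simp only [e3, mul_ite, mul_zero]
    simp [Finset.sum_ite_eq]
  -- assemble
  simp only [torsionTS]
  rw [hA, hB]
  simp only [Ncon, Mcon]
  -- rearrange δM/δx part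
  have L1 : ∑ c, ((∑ k, chS g m j k x * y k c)
        + (1/4) * ∑ e, ∑ l, h t c e * (g x)⁻¹ m l * Ucurl U e l j t x) * chT h c mu a t
      = (∑ k, (∑ c, chT h c mu a t * y k c) * chS g m j k x)
        + (1/4) * ∑ e, ∑ l,
            (∑ c, h t c e * chT h c mu a t) * ((g x)⁻¹ m l * Ucurl U e l j t x) := by
    simp only [add_mul, Finset.sum_add_distrib]
    congr 1
    · simp only [Finset.sum_mul]
      rw [Finset.sum_comm]
      exact Finset.sum_congr rfl fun k _ => Finset.sum_congr rfl fun c _ => by ring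
    · have step : ∀ c : Fin p,
          ((1/4) * ∑ e, ∑ l, h t c e * (g x)⁻¹ m l * Ucurl U e l j t x) * chT h c mu a t
          = ∑ e, ∑ l, (1/4) * (h t c e * chT h c mu a t
              * ((g x)⁻¹ m l * Ucurl U e l j t x)) := by
        intro c
        simp only [Finset.mul_sum, Finset.sum_mul]
        exact Finset.sum_congr rfl fun e _ => Finset.sum_congr rfl fun l _ => by ring
      simp only [step]
      rw [Finset.sum_comm, Finset.mul_sum]
      apply Finset.sum_congr rfl; intro e _
      rw [Finset.sum_comm, Finset.mul_sum]
      apply Finset.sum_congr rfl; intro l _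
      rw [Finset.sum_mul, Finset.mul_sum]
  have L2 : ∑ k, (-∑ c, chT h c mu a t * y k c) * chS g m j k x
      = -∑ k, (∑ c, chT h c mu a t * y k c) * chS g m j k x := by
    simp [neg_mul]
  -- rearrange RHS
  have R1 : ∑ e, ∑ k, h t mu e * (g x)⁻¹ m k *
        ((∑ c, chT h e a c t * Ucurl U c k j t x) + pd (fun s => Ucurl U e k j s x) a t)
      = (∑ e, ∑ l, (∑ c, h t mu c * chT h c a e t) * ((g x)⁻¹ m l * Ucurl U e l j t x))
        + ∑ e, ∑ l, h t mu e * (g x)⁻¹ m l * pd (fun s => Ucurl U e l j s x) a t := by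
    have step : ∀ (e : Fin p) (k : Fin n), h t mu e * (g x)⁻¹ m k *
          ((∑ c, chT h e a c t * Ucurl U c k j t x) + pd (fun s => Ucurl U e k j s x) a t)
        = (∑ c, h t mu e * chT h e a c t * ((g x)⁻¹ m k * Ucurl U c k j t x))
          + h t mu e * (g x)⁻¹ m k * pd (fun s => Ucurl U e k j s x) a t := by
      intro e k
      rw [mul_add]; congr 1
      rw [Finset.mul_sum]
      exact Finset.sum_congr rfl fun c _ => by ring
    simp only [step, Finset.sum_add_distrib]
    congr 1
    rw [swap3 (fun e c l => h t mu e * chT h e a c t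
      * ((g x)⁻¹ m l * Ucurl U c l j t x))]
    apply Finset.sum_congr rfl; intro e _
    apply Finset.sum_congr rfl; intro l _
    rw [Finset.sum_mul]
  rw [L1, L2, R1]
  -- metric compatibility identity
  have key : ∀ (e : Fin p) (l : Fin n),
      (∑ c, h t c e * chT h c mu a t) * ((g x)⁻¹ m l * Ucurl U e l j t x)
      + (∑ c, h t mu c * chT h c a e t) * ((g x)⁻¹ m l * Ucurl U e l j t x)
      = pd (fun s => h s mu e) a t * (g x)⁻¹ m l * Ucurl U e l j t x := by
    intro e l
    rw [metric_id h hsymm hinv mu a e t]; ring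
  have main : (∑ e, ∑ l, (∑ c, h t c e * chT h c mu a t)
          * ((g x)⁻¹ m l * Ucurl U e l j t x))
      + (∑ e, ∑ l, (∑ c, h t mu c * chT h c a e t)
          * ((g x)⁻¹ m l * Ucurl U e l j t x))
      = ∑ c, ∑ l, pd (fun s => h s mu c) a t * (g x)⁻¹ m l * Ucurl U c l j t x := by
    rw [← Finset.sum_add_distrib]
    apply Finset.sum_congr rfl; intro e _
    rw [← Finset.sum_add_distrib]
    exact Finset.sum_congr rfl fun l _ => key e l
  simp only [Finset.sum_add_distrib]
  linarith [main]


end
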